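/- Let f be a valid assignment of the constructed 2-matching instance with w(f) ≤ t. For i ∈ {1,2}, define M_i = {(p_r, q_s) : (r,s) ∈ A and f((r,s)) = {p^i_r, q^i_s}}. Then M₁ ⊆ 𝒜₁ and M₂ ⊆ 𝒜₂ are perfect matchings with M₁ ∩ M₂ = ∅ and |M₁| = |M₂| = n. -/

import Mathlib

/-- The ground set `B` of the constructed 2-matching instance: elements `p^i_r`
(left summand), `q^i_s` (middle summand), and `z_{rs}, z'_{rs}` (right summand,
indexed by a pair and a tag in `Fin 2`). -/
abbrev DMB (n : ℕ) := (Fin 2 × Fin n) ⊕ ((Fin 2 × Fin n) ⊕ ((Fin n × Fin n) × Fin 2))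

/-- The candidate set `{p^i_r, q^i_s}` for the pair `a = (r, s)`. -/
def pqSet {n : ℕ} (i : Fin 2) (a : Fin n × Fin n) : Finset (DMB n) :=
  {Sum.inl (i, a.1), Sum.inr (Sum.inl (i, a.2))}

/-- The candidate set `{z_{rs}, z'_{rs}}` for the pair `a = (r, s)`. -/
def zSet {n : ℕ} (a : Fin n × Fin n) : Finset (DMB n) :=
  {Sum.inr (Sum.inr (a, 0)), Sum.inr (Sum.inr (a, 1))}

/-- The candidate sets `P_{(r,s)}` of the constructed 2-matching instance. -/
def Pdm {n : ℕ} (A1 A2 : Finset (Fin n × Fin n)) (a : Fin n × Fin n) :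
    Finset (Finset (DMB n)) :=
  (if a ∈ A1 then {pqSet 0 a} else ∅) ∪ (if a ∈ A2 then {pqSet 1 a} else ∅) ∪ {zSet a}

/-- The weights of the constructed 2-matching instance: `0` on `{p^i_r, q^i_s}` and `1`
on `{z_{rs}, z'_{rs}}` when `(p_r,q_s) ∈ 𝒜₁ △ 𝒜₂`; `1` and `2` respectively when
`(p_r,q_s) ∈ 𝒜₁ ∩ 𝒜₂`. -/
def wdm {n : ℕ} (A1 A2 : Finset (Fin n × Fin n)) (a : Fin n × Fin n)
    (j : Finset (DMB n)) : ℝ :=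
  (if j = zSet a then 1 else 0) + (if a ∈ A1 ∧ a ∈ A2 then 1 else 0)

/-- A perfect matching: `n` pairs such that every `p_r` and every `q_s` occurs in
exactly one pair. -/
def IsPM {n : ℕ} (M : Finset (Fin n × Fin n)) : Prop :=
  M.card = n ∧ (∀ r : Fin n, ∃! s : Fin n, (r, s) ∈ M) ∧
    (∀ s : Fin n, ∃! r : Fin n, (r, s) ∈ M)

/-!
Picking a `z`-set costs one unit more than picking a `pq`-set, so the weight bound
`w(f) ≤ |𝒜₁| + |𝒜₂| - 2n = |A| + |𝒜₁ ∩ 𝒜₂| - 2n` forces at most `|A| - 2n` pairs onto their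
`z`-sets, i.e. at least `2n` pairs onto a set `{p^i_r, q^i_s}`. For a fixed layer `i` these sets
are pairwise disjoint, so the pairs choosing layer `i` share no `p_r` and no `q_s`: each layer
has at most `n` pairs. Hence both layers have exactly `n` pairs, and a set of `n` pairs whose
coordinates are injective is a perfect matching.
-/

open Finset

lemma isPM_of_injOn {n : ℕ} {M : Finset (Fin n × Fin n)}
    (h₁ : Set.InjOn Prod.fst (M : Set (Fin n × Fin n)))
    (h₂ : Set.InjOn Prod.snd (M : Set (Fin n × Fin n))) (hc : M.card = n) : IsPM M := by
  have hcard : (univ : Finset (Fin n)).card ≤ M.card := by simp [hc]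
  refine ⟨hc, fun r => ?_, fun s => ?_⟩
  · obtain ⟨a, ha, rfl⟩ :=
      surjOn_of_injOn_of_card_le Prod.fst (fun _ _ => mem_coe.2 (mem_univ _)) h₁ hcard
        (mem_coe.2 (mem_univ r))
    exact ⟨a.2, ha, fun s hs => congrArg Prod.snd (h₁ hs ha rfl)⟩
  · obtain ⟨a, ha, rfl⟩ :=
      surjOn_of_injOn_of_card_le Prod.snd (fun _ _ => mem_coe.2 (mem_univ _)) h₂ hcard
        (mem_coe.2 (mem_univ s))
    exact ⟨a.1, ha, fun r hr => congrArg Prod.fst (h₂ hr ha rfl)⟩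

section TwoMatchingInstance

variable {n : ℕ} {A1 A2 : Finset (Fin n × Fin n)}

lemma pqSet_zero_ne_pqSet_one (a b : Fin n × Fin n) : pqSet 0 a ≠ pqSet 1 b := by
  intro h
  have : (Sum.inl (0, a.1) : DMB n) ∈ pqSet 1 b := h ▸ by simp [pqSet]
  simp [pqSet] at this

lemma pqSet_ne_zSet (i : Fin 2) (a b : Fin n × Fin n) : pqSet i a ≠ zSet b := by
  intro h
  have : (Sum.inl (i, a.1) : DMB n) ∈ zSet b := h ▸ by simp [pqSet]
  simp [zSet] at this

lemma not_disjoint_pqSet (i : Fin 2) {a b : Fin n × Fin n} (h : a.1 = b.1 ∨ a.2 = b.2) :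
    ¬Disjoint (pqSet i a) (pqSet i b) := by
  rw [not_disjoint_iff]
  rcases h with h | h
  · exact ⟨Sum.inl (i, a.1), by simp [pqSet], by simp [pqSet, h]⟩
  · exact ⟨Sum.inr (Sum.inl (i, a.2)), by simp [pqSet], by simp [pqSet, h]⟩

lemma mem_Pdm {a : Fin n × Fin n} {j : Finset (DMB n)} :
    j ∈ Pdm A1 A2 a ↔ (a ∈ A1 ∧ j = pqSet 0 a) ∨ (a ∈ A2 ∧ j = pqSet 1 a) ∨ j = zSet a := by
  unfold Pdm
  split_ifs <;> simp_all

variable {f : Fin n × Fin n → Finset (DMB n)} {s : Finset (Fin n × Fin n)}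

lemma filter_pqSet_zero_subset (hfP : ∀ a ∈ s, f a ∈ Pdm A1 A2 a) :
    s.filter (fun a => f a = pqSet 0 a) ⊆ A1 := by
  intro a ha
  rw [mem_filter] at ha
  rcases mem_Pdm.1 (hfP a ha.1) with ⟨h, -⟩ | ⟨-, h⟩ | h
  · exact h
  · exact absurd (ha.2.symm.trans h) (pqSet_zero_ne_pqSet_one a a)
  · exact absurd (ha.2.symm.trans h) (pqSet_ne_zSet 0 a a)

lemma filter_pqSet_one_subset (hfP : ∀ a ∈ s, f a ∈ Pdm A1 A2 a) :
    s.filter (fun a => f a = pqSet 1 a) ⊆ A2 := by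
  intro a ha
  rw [mem_filter] at ha
  rcases mem_Pdm.1 (hfP a ha.1) with ⟨-, h⟩ | ⟨h, -⟩ | h
  · exact absurd (h.symm.trans ha.2) (pqSet_zero_ne_pqSet_one a a)
  · exact h
  · exact absurd (ha.2.symm.trans h) (pqSet_ne_zSet 1 a a)

lemma card_le_card_filter_pqSet_add (hfP : ∀ a ∈ s, f a ∈ Pdm A1 A2 a) :
    s.card ≤ (s.filter fun a => f a = pqSet 0 a).card + (s.filter fun a => f a = pqSet 1 a).card
      + (s.filter fun a => f a = zSet a).card := by
  have hcover : s ⊆ (s.filter fun a => f a = pqSet 0 a) ∪ (s.filter fun a => f a = pqSet 1 a)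
      ∪ (s.filter fun a => f a = zSet a) := by
    intro a ha
    rcases mem_Pdm.1 (hfP a ha) with ⟨-, h⟩ | ⟨-, h⟩ | h <;> simp [ha, h]
  exact (card_le_card hcover).trans
    ((card_union_le _ _).trans (Nat.add_le_add_right (card_union_le _ _) _))

lemma eq_of_mem_filter_pqSet (hfd : (s : Set (Fin n × Fin n)).PairwiseDisjoint f) {i : Fin 2}
    {a b : Fin n × Fin n} (ha : a ∈ s.filter fun a => f a = pqSet i a)
    (hb : b ∈ s.filter fun a => f a = pqSet i a) (h : a.1 = b.1 ∨ a.2 = b.2) : a = b := by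
  rw [mem_filter] at ha hb
  by_contra hne
  have hdisj : Disjoint (f a) (f b) := hfd ha.1 hb.1 hne
  rw [ha.2, hb.2] at hdisj
  exact not_disjoint_pqSet i h hdisj

lemma injOn_fst_filter_pqSet (hfd : (s : Set (Fin n × Fin n)).PairwiseDisjoint f) (i : Fin 2) :
    Set.InjOn Prod.fst (s.filter fun a => f a = pqSet i a : Set (Fin n × Fin n)) :=
  fun _ ha _ hb hab => eq_of_mem_filter_pqSet hfd ha hb (Or.inl hab)

lemma injOn_snd_filter_pqSet (hfd : (s : Set (Fin n × Fin n)).PairwiseDisjoint f) (i : Fin 2) :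
    Set.InjOn Prod.snd (s.filter fun a => f a = pqSet i a : Set (Fin n × Fin n)) :=
  fun _ ha _ hb hab => eq_of_mem_filter_pqSet hfd ha hb (Or.inr hab)

lemma card_filter_pqSet_le (hfd : (s : Set (Fin n × Fin n)).PairwiseDisjoint f) (i : Fin 2) :
    (s.filter fun a => f a = pqSet i a).card ≤ n := by
  simpa using card_le_card_of_injOn Prod.fst (fun a _ => mem_coe.2 (mem_univ a.1))
    (injOn_fst_filter_pqSet hfd i)

lemma isPM_filter_pqSet (hfd : (s : Set (Fin n × Fin n)).PairwiseDisjoint f) (i : Fin 2)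
    (hc : (s.filter fun a => f a = pqSet i a).card = n) :
    IsPM (s.filter fun a => f a = pqSet i a) :=
  isPM_of_injOn (injOn_fst_filter_pqSet hfd i) (injOn_snd_filter_pqSet hfd i) hc

lemma sum_wdm_eq :
    ∑ a ∈ A1 ∪ A2, wdm A1 A2 a (f a)
      = ((A1 ∪ A2).filter fun a => f a = zSet a).card + (A1 ∩ A2).card := by
  simp only [wdm, sum_add_distrib, sum_boole]
  congr 3
  ext a
  simp only [mem_filter, mem_union, mem_inter]
  tauto

lemma two_mul_le_card_filter_pqSet_add (hfP : ∀ a ∈ A1 ∪ A2, f a ∈ Pdm A1 A2 a)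
    (hwf : ∑ a ∈ A1 ∪ A2, wdm A1 A2 a (f a) ≤ (A1.card : ℝ) + (A2.card : ℝ) - 2 * n) :
    2 * n ≤ ((A1 ∪ A2).filter fun a => f a = pqSet 0 a).card
      + ((A1 ∪ A2).filter fun a => f a = pqSet 1 a).card := by
  rw [sum_wdm_eq] at hwf
  have hwf' : ((A1 ∪ A2).filter fun a => f a = zSet a).card + (A1 ∩ A2).card + 2 * n
      ≤ A1.card + A2.card := by
    have : (((A1 ∪ A2).filter fun a => f a = zSet a).card + (A1 ∩ A2).card + 2 * n : ℝ)
        ≤ A1.card + A2.card := by linarith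
    exact_mod_cast this
  have hcover := card_le_card_filter_pqSet_add hfP
  have hunion := card_union_add_card_inter A1 A2
  omega

end TwoMatchingInstance

theorem stmt_8_general {n : ℕ}
    (A1 A2 : Finset (Fin n × Fin n))
    (f : Fin n × Fin n → Finset (DMB n))
    (hfP : ∀ a ∈ A1 ∪ A2, f a ∈ Pdm A1 A2 a)
    (hfd : ∀ a₁ ∈ A1 ∪ A2, ∀ a₂ ∈ A1 ∪ A2, a₁ ≠ a₂ → f a₁ ∩ f a₂ = ∅)
    (hwf : ∑ a ∈ A1 ∪ A2, wdm A1 A2 a (f a) ≤ (A1.card : ℝ) + (A2.card : ℝ) - 2 * n)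
    (M1 M2 : Finset (Fin n × Fin n))
    (hM1 : M1 = (A1 ∪ A2).filter (fun a => f a = pqSet 0 a))
    (hM2 : M2 = (A1 ∪ A2).filter (fun a => f a = pqSet 1 a)) :
    M1 ⊆ A1 ∧ M2 ⊆ A2 ∧ IsPM M1 ∧ IsPM M2 ∧ M1 ∩ M2 = ∅ ∧
      M1.card = n ∧ M2.card = n := by
  have hdisj : ((A1 ∪ A2 : Finset _) : Set (Fin n × Fin n)).PairwiseDisjoint f :=
    fun a ha b hb hab => disjoint_iff_inter_eq_empty.2 (hfd a ha b hb hab)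
  have hle1 : M1.card ≤ n := hM1 ▸ card_filter_pqSet_le hdisj 0
  have hle2 : M2.card ≤ n := hM2 ▸ card_filter_pqSet_le hdisj 1
  have hge : 2 * n ≤ M1.card + M2.card := hM1 ▸ hM2 ▸ two_mul_le_card_filter_pqSet_add hfP hwf
  have hc1 : M1.card = n := by omega
  have hc2 : M2.card = n := by omega
  subst hM1 hM2
  refine ⟨filter_pqSet_zero_subset hfP, filter_pqSet_one_subset hfP,
    isPM_filter_pqSet hdisj 0 hc1, isPM_filter_pqSet hdisj 1 hc2, ?_, hc1, hc2⟩
  exact disjoint_iff_inter_eq_empty.1 <| disjoint_filter.2 fun a _ h0 h1 =>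
    pqSet_zero_ne_pqSet_one a a (h0.symm.trans h1)

/-- from a valid assignment `f` of the constructed 2-matching instance
with `w(f) ≤ t = |𝒜₁| + |𝒜₂| − 2n`, the sets
`M_i = {(p_r,q_s) : (r,s) ∈ A, f(r,s) = {p^i_r, q^i_s}}` are disjoint perfect
matchings with `M₁ ⊆ 𝒜₁`, `M₂ ⊆ 𝒜₂` and `|M₁| = |M₂| = n`. -/
theorem stmt_8 {n : ℕ} (hn : 0 < n)
    (A1 A2 : Finset (Fin n × Fin n))
    (f : Fin n × Fin n → Finset (DMB n))
    (hfP : ∀ a ∈ A1 ∪ A2, f a ∈ Pdm A1 A2 a)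
    (hfd : ∀ a₁ ∈ A1 ∪ A2, ∀ a₂ ∈ A1 ∪ A2, a₁ ≠ a₂ → f a₁ ∩ f a₂ = ∅)
    (hwf : ∑ a ∈ A1 ∪ A2, wdm A1 A2 a (f a) ≤ (A1.card : ℝ) + (A2.card : ℝ) - 2 * n)
    (M1 M2 : Finset (Fin n × Fin n))
    (hM1 : M1 = (A1 ∪ A2).filter (fun a => f a = pqSet 0 a))
    (hM2 : M2 = (A1 ∪ A2).filter (fun a => f a = pqSet 1 a)) :
    M1 ⊆ A1 ∧ M2 ⊆ A2 ∧ IsPM M1 ∧ IsPM M2 ∧ M1 ∩ M2 = ∅ ∧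
      M1.card = n ∧ M2.card = n :=
  stmt_8_general A1 A2 f hfP hfd hwf M1 M2 hM1 hM2
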